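/- A simplicial complex Δ is (non-pure) shellable with shelling order F_1,...,F_m if and only if the Alexander dual ideal I_{Δ^∨} = (u_1,...,u_m), with u_i = ∏_{j ∉ F_i} x_j, has linear quotients with admissible order u_1,...,u_m; and in that case R_δ(F_k) = q_{u_k,σ}(I_{Δ^∨}) for all k. -/

import Mathlib

attribute [local instance] Classical.propDecidable

abbrev Mon (n : ℕ) := Fin n →₀ ℕ

def mdeg {n : ℕ} (u : Mon n) : ℕ := u.sum fun _ e => e

/-- `mcolon u v` is the exponent vector of `u : v = u / gcd(u,v)`. -/
noncomputable def mcolon {n : ℕ} (u v : Mon n) : Mon n := u - v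

def IsAdmissible {n : ℕ} (L : List (Mon n)) : Prop :=
  ∀ i (hi : i < L.length), ∀ j (hj : j < i), ∃ k, ∃ hk : k < i,
    mdeg (mcolon (L[k]'(hk.trans hi)) (L[i]'hi)) = 1 ∧
    mcolon (L[k]'(hk.trans hi)) (L[i]'hi) ≤
      mcolon (L[j]'(hj.trans hi)) (L[i]'hi)

def LinearQuotientsSet {n : ℕ} (T : Set (Mon n)) : Prop :=
  ∃ L : List (Mon n), L.Nodup ∧ IsAdmissible L ∧ {u | u ∈ L} = T

def LinearQuotients {n : ℕ} (G : Finset (Mon n)) : Prop :=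
  LinearQuotientsSet (↑G : Set (Mon n))

/-- A (non-pure) shelling in the sense of Björner–Wachs: for each `k ≥ 2` the
intersection of `⟨F_k⟩` with `⟨F_1,…,F_{k-1}⟩` is nonempty and pure of dimension
`dim F_k - 1`. -/
def IsShelling {n : ℕ} (L : List (Finset (Fin n))) : Prop :=
  ∀ k (hk : k < L.length), 0 < k →
    (∃ G : Finset (Fin n), G ⊆ L[k]'hk ∧ G.card + 1 = (L[k]'hk).card ∧
      ∃ l, ∃ hl : l < k, G ⊆ L[l]'(hl.trans hk)) ∧
    (∀ G : Finset (Fin n), G ⊆ L[k]'hk →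
      (∃ l, ∃ hl : l < k, G ⊆ L[l]'(hl.trans hk)) →
      ∃ H : Finset (Fin n), G ⊆ H ∧ H ⊆ L[k]'hk ∧ H.card + 1 = (L[k]'hk).card ∧
        ∃ l, ∃ hl : l < k, H ⊆ L[l]'(hl.trans hk))

/-- The restriction set `R_δ(F) = {i ∈ F : F \ {i} ∈ ⟨F_1,…,F_{k-1}⟩}`, where `F` is the
`k`-th facet in the order `δ` given by the list `L`. -/
noncomputable def Rset {n : ℕ} (L : List (Finset (Fin n))) (F : Finset (Fin n)) :
    Finset (Fin n) :=
  F.filter fun i => ∃ l, ∃ hl : l < L.idxOf F,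
    F.erase i ⊆ L[l]'(hl.trans_le List.idxOf_le_length)

/-- `qset L u` is the set of (indices of) variables generating the colon ideal
`(u_1,…,u_{j-1}) : u_j` where `u = u_j` in the admissible order `L`. -/
def qset {n : ℕ} (L : List (Mon n)) (u : Mon n) : Set (Fin n) :=
  {t | ∃ j, j < L.idxOf u ∧ ∃ hj : j < L.length,
    mcolon (L[j]'hj) u = Finsupp.single t 1}

/-- The squarefree monomial with support `A`. -/
noncomputable def sqMon {n : ℕ} (A : Finset (Fin n)) : Mon n :=
  A.sum fun i => Finsupp.single i 1


/-!
Under `F ↦ u_F = ∏_{j ∉ F} x_j`, the colon `u_{F_l} : u_{F_k}` is the squarefree monomial on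
`F_k \ F_l`. Hence both conditions say the same thing about the facets: every `F_j` with `j < k`
meets `F_k` inside some earlier `F_l` with `|F_k \ F_l| = 1`. As the facets form an antichain,
a face `F_k \ {t}` lies in an earlier `F_l` exactly when `F_k \ F_l = {t}`, which identifies
`R_δ(F_k)` with `q_{u_k,σ}`.
-/

open Finset

namespace Finset

variable {α : Type*} [DecidableEq α]

theorem erase_subset_iff_sdiff_subset_singleton {s t : Finset α} {a : α} :
    s.erase a ⊆ t ↔ s \ t ⊆ {a} := by
  rw [← sdiff_singleton_eq_erase]
  exact sdiff_le_comm

theorem sdiff_eq_singleton_iff_of_not_subset {s t : Finset α} {a : α} (h : ¬ s ⊆ t) :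
    s \ t = {a} ↔ a ∈ s ∧ s.erase a ⊆ t := by
  rw [erase_subset_iff_sdiff_subset_singleton, (sdiff_nonempty.mpr h).subset_singleton_iff]
  exact ⟨fun heq => ⟨(mem_sdiff.mp (heq ▸ mem_singleton_self a)).1, heq⟩, And.right⟩

end Finset

theorem List.Nodup.not_getElem_subset_getElem {α : Type*} {L : List (Finset α)} (hnd : L.Nodup)
    (hanti : ∀ F ∈ L, ∀ G ∈ L, F ⊆ G → F = G) {k l : ℕ} (hk : k < L.length)
    (hl : l < L.length) (hkl : k ≠ l) : ¬ L[k] ⊆ L[l] := fun h =>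
  hkl (hnd.getElem_inj_iff.mp (hanti _ (L.getElem_mem hk) _ (L.getElem_mem hl) h))

section SquarefreeMonomial

variable {n : ℕ}

theorem sqMon_apply (A : Finset (Fin n)) (j : Fin n) :
    sqMon A j = if j ∈ A then 1 else 0 := by
  simp [sqMon, Finsupp.finsetSum_apply, Finsupp.single_apply]

theorem support_sqMon (A : Finset (Fin n)) : (sqMon A).support = A := by
  ext j
  simp [sqMon_apply]

theorem sqMon_injective : Function.Injective (sqMon (n := n)) := fun A B h => by
  rw [← support_sqMon A, ← support_sqMon B, h]

theorem mdeg_sqMon (A : Finset (Fin n)) : mdeg (sqMon A) = #A := by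
  simp [mdeg, Finsupp.sum, support_sqMon, sqMon_apply]

theorem mcolon_sqMon (A B : Finset (Fin n)) : mcolon (sqMon A) (sqMon B) = sqMon (A \ B) := by
  ext j
  simp only [mcolon, Finsupp.tsub_apply, sqMon_apply, mem_sdiff]
  split_ifs <;> simp_all

theorem mcolon_sqMon_compl (A B : Finset (Fin n)) :
    mcolon (sqMon Aᶜ) (sqMon Bᶜ) = sqMon (B \ A) := by
  rw [mcolon_sqMon, compl_sdiff_compl]

theorem sqMon_le_sqMon_iff {A B : Finset (Fin n)} : sqMon A ≤ sqMon B ↔ A ⊆ B := by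
  simp only [Finsupp.le_def, sqMon_apply, subset_iff]
  refine forall_congr' fun j => ?_
  split_ifs <;> simp_all

theorem sqMon_eq_single_iff {A : Finset (Fin n)} {t : Fin n} :
    sqMon A = Finsupp.single t 1 ↔ A = {t} := by
  rw [show Finsupp.single t 1 = sqMon {t} by simp [sqMon]]
  exact sqMon_injective.eq_iff

end SquarefreeMonomial

section Shelling

variable {n : ℕ} {L : List (Finset (Fin n))}

/-- The Björner–Wachs facet-wise form of a shelling. -/
def IsShellingOrder (L : List (Finset (Fin n))) : Prop :=
  ∀ k (hk : k < L.length), ∀ j (hj : j < k), ∃ l, ∃ hl : l < k,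
    #(L[k] \ L[l]) = 1 ∧ L[k] \ L[l] ⊆ L[k] \ L[j]

theorem isAdmissible_map_sqMon_compl_iff (L : List (Finset (Fin n))) :
    IsAdmissible (L.map fun F => sqMon Fᶜ) ↔ IsShellingOrder L := by
  simp only [IsAdmissible, IsShellingOrder, List.length_map, List.getElem_map,
    mcolon_sqMon_compl, mdeg_sqMon, sqMon_le_sqMon_iff]

theorem IsShellingOrder.isShelling (h : IsShellingOrder L) : IsShelling L := by
  intro k hk hk0
  have hfacet : ∀ j (hj : j < k), ∃ l, ∃ hl : l < k, ∃ t,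
      t ∈ L[k] ∧ t ∉ L[j] ∧ L[k].erase t ⊆ L[l] := by
    intro j hj
    obtain ⟨l, hl, hcard, hsub⟩ := h k hk j hj
    obtain ⟨t, ht⟩ := card_eq_one.mp hcard
    obtain ⟨htk, htj⟩ := mem_sdiff.mp (hsub (ht ▸ mem_singleton_self t))
    exact ⟨l, hl, t, htk, htj, erase_subset_iff_sdiff_subset_singleton.mpr ht.subset⟩
  refine ⟨?_, ?_⟩
  · obtain ⟨l, hl, t, htk, -, hsub⟩ := hfacet 0 hk0
    exact ⟨L[k].erase t, erase_subset _ _, card_erase_add_one htk, l, hl, hsub⟩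
  · rintro G hGk ⟨j, hj, hGj⟩
    obtain ⟨l, hl, t, htk, htj, hsub⟩ := hfacet j hj
    exact ⟨L[k].erase t, subset_erase.mpr ⟨hGk, fun htG => htj (hGj htG)⟩, erase_subset _ _,
      card_erase_add_one htk, l, hl, hsub⟩

theorem IsShelling.isShellingOrder
    (hL : ∀ k l (hk : k < L.length) (hl : l < k), ¬ L[k] ⊆ L[l]) (h : IsShelling L) :
    IsShellingOrder L := by
  intro k hk j hj
  obtain ⟨-, hpure⟩ := h k hk (by omega)
  obtain ⟨H, hH, hHk, hcard, l, hl, hHl⟩ :=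
    hpure (L[k] ∩ L[j]) inter_subset_left ⟨j, hj, inter_subset_right⟩
  have hdiff : L[k] \ L[l] ⊆ L[k] \ H := sdiff_subset_sdiff subset_rfl hHl
  refine ⟨l, hl, le_antisymm ?_ ?_, hdiff.trans ?_⟩
  · calc #(L[k] \ L[l]) ≤ #(L[k] \ H) := card_le_card hdiff
      _ = 1 := by rw [card_sdiff_of_subset hHk]; omega
  · exact card_pos.mpr (sdiff_nonempty.mpr (hL k l hk hl))
  · exact (sdiff_subset_sdiff subset_rfl hH).trans_eq (sdiff_inter_self_left _ _)

theorem coe_Rset_getElem (hnd : L.Nodup) (k : ℕ) (hk : k < L.length) :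
    (↑(Rset L L[k]) : Set (Fin n)) = {t | t ∈ L[k] ∧ ∃ l, ∃ hl : l < k, L[k].erase t ⊆ L[l]} := by
  ext t
  simp only [Rset, coe_filter, Set.mem_ofPred_eq, hnd.idxOf_getElem]

theorem qset_map_sqMon_compl_getElem (hnd : L.Nodup) (k : ℕ) (hk : k < L.length) :
    qset (L.map fun F => sqMon Fᶜ) (sqMon L[k]ᶜ) = {t | ∃ l, ∃ hl : l < k, L[k] \ L[l] = {t}} := by
  have hidx : (L.map fun F => sqMon Fᶜ).idxOf (sqMon L[k]ᶜ) = k := by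
    have hmap : (L.map fun F => sqMon Fᶜ).Nodup :=
      hnd.map fun A B h => compl_injective (sqMon_injective h)
    have := hmap.idxOf_getElem k (by simpa using hk)
    rwa [List.getElem_map] at this
  ext t
  simp only [qset, Set.mem_ofPred_eq, hidx, List.length_map, List.getElem_map,
    mcolon_sqMon_compl, sqMon_eq_single_iff]
  exact ⟨fun ⟨l, hl, _, h⟩ => ⟨l, hl, h⟩, fun ⟨l, hl, h⟩ => ⟨l, hl, hl.trans hk, h⟩⟩

end Shelling

/-- A simplicial complex `Δ` (with facet list `L`, an antichain) is shellable with
shelling `F_1,…,F_m` if and only if the Alexander dual ideal `I_{Δ^∨}`, minimally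
generated by the monomials `u_i = ∏_{j ∉ F_i} x_j`, has linear quotients with
admissible order `u_1,…,u_m`; in that case `R_δ(F_k) = q_{u_k,σ}(I_{Δ^∨})`. -/
theorem shelling_iff_alexander_dual_linearQuotients {n : ℕ}
    (L : List (Finset (Fin n))) (hnd : L.Nodup)
    (hanti : ∀ F ∈ L, ∀ G ∈ L, F ⊆ G → F = G) :
    (IsShelling L ↔ IsAdmissible (L.map fun F => sqMon Fᶜ)) ∧
    (IsShelling L → ∀ k (hk : k < L.length),
      ↑(Rset L (L[k]'hk)) = qset (L.map fun F => sqMon Fᶜ) (sqMon ((L[k]'hk)ᶜ))) := by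
  have hL : ∀ k l (hk : k < L.length) (hl : l < k), ¬ L[k] ⊆ L[l] := fun k l hk hl =>
    hnd.not_getElem_subset_getElem hanti hk (hl.trans hk) hl.ne'
  refine ⟨⟨fun h => (isAdmissible_map_sqMon_compl_iff L).mpr (h.isShellingOrder hL),
    fun h => ((isAdmissible_map_sqMon_compl_iff L).mp h).isShelling⟩, fun _ k hk => ?_⟩
  rw [coe_Rset_getElem hnd, qset_map_sqMon_compl_getElem hnd]
  ext t
  constructor
  · rintro ⟨htk, l, hl, hsub⟩
    exact ⟨l, hl, (sdiff_eq_singleton_iff_of_not_subset (hL k l hk hl)).mpr ⟨htk, hsub⟩⟩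
  · rintro ⟨l, hl, hsdiff⟩
    obtain ⟨htk, hsub⟩ := (sdiff_eq_singleton_iff_of_not_subset (hL k l hk hl)).mp hsdiff
    exact ⟨htk, l, hl, hsub⟩
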